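/- arXiv:2309.00894 — 3 statements merged into one kernel-verified Lean document; each statement's English description precedes it below -/
import Mathlib

section
/- For any classifier g and any noise rate η ∈ [0, 1), the ψ-risk under symmetric label noise decomposes as R^η_ψ(g) = (1 − ηk/(k−1))·R_ψ(g) + (η/(k−1))·E_{x∼μ}[ Σ_{i=1}^{k} ψ(g(x), i) ]. -/
open MeasureTheory Finset

/-- The clean ψ-risk: expected loss under the clean data distribution. -/
noncomputable def cleanRisk {X : Type*} [MeasurableSpace X] {k : ℕ}
    (μ : Measure (X × Fin k)) (ψ : (Fin k → ℝ) → Fin k → ℝ) (g : X → Fin k → ℝ) : ℝ :=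
  ∫ p, ψ (g p.1) p.2 ∂μ

/-- The ψ-risk under symmetric (uniform) label noise with noise rate η:
the clean label is kept with probability 1 − η and flipped to each of
the other k − 1 labels with probability η/(k−1). -/
noncomputable def noisyRisk {X : Type*} [MeasurableSpace X] {k : ℕ}
    (μ : Measure (X × Fin k)) (ψ : (Fin k → ℝ) → Fin k → ℝ) (g : X → Fin k → ℝ)
    (η : ℝ) : ℝ :=
  ∫ p, ((1 - η) * ψ (g p.1) p.2
      + (η / ((k : ℝ) - 1)) * ∑ i ∈ Finset.univ.erase p.2, ψ (g p.1) i) ∂μ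

lemma integrable_eval {X : Type*} [MeasurableSpace X] {k : ℕ}
    (μ : Measure (X × Fin k)) (ψ : (Fin k → ℝ) → Fin k → ℝ) (g : X → Fin k → ℝ)
    (hint : ∀ i : Fin k, Integrable (fun p : X × Fin k => ψ (g p.1) i) μ) :
    Integrable (fun p : X × Fin k => ψ (g p.1) p.2) μ := by
  have heq : (fun p : X × Fin k => ψ (g p.1) p.2)
      = fun p => ∑ i : Fin k, Set.indicator {q : X × Fin k | q.2 = i}
          (fun q => ψ (g q.1) i) p := by
    funext p
    rw [Finset.sum_eq_single p.2]
    · simp [Set.indicator_of_mem, Set.mem_setOf_eq]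
    · intro i _ hi
      apply Set.indicator_of_notMem
      simp [Set.mem_setOf_eq]
      exact fun h => hi h.symm
    · simp
  rw [heq]
  apply integrable_finset_sum
  intro i _
  exact (hint i).indicator (measurable_snd (MeasurableSet.singleton i))

/-- the noisy risk under symmetric label noise decomposes as
R^η_ψ(g) = (1 − ηk/(k−1))·R_ψ(g) + (η/(k−1))·E[Σ_i ψ(g(x), i)]. -/
theorem noisyRisk_decomposition {X : Type*} [MeasurableSpace X] {k : ℕ} (hk : 2 ≤ k)
    (μ : Measure (X × Fin k)) [IsProbabilityMeasure μ]
    (g : X → Fin k → ℝ) (ψ : (Fin k → ℝ) → Fin k → ℝ)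
    (hint : ∀ i : Fin k, Integrable (fun p : X × Fin k => ψ (g p.1) i) μ)
    (η : ℝ) (hη0 : 0 ≤ η) (hη1 : η < 1) :
    noisyRisk μ ψ g η
      = (1 - η * (k : ℝ) / ((k : ℝ) - 1)) * cleanRisk μ ψ g
        + (η / ((k : ℝ) - 1)) * ∫ p, ∑ i, ψ (g p.1) i ∂μ := by
  have hk1 : (1 : ℝ) ≤ (k : ℝ) - 1 := by
    have : (2 : ℝ) ≤ (k : ℝ) := by exact_mod_cast hk
    linarith
  have hkne : (k : ℝ) - 1 ≠ 0 := by linarith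
  have h1 : Integrable (fun p : X × Fin k => ψ (g p.1) p.2) μ :=
    integrable_eval μ ψ g hint
  have h2 : Integrable (fun p : X × Fin k => ∑ i, ψ (g p.1) i) μ :=
    integrable_finset_sum _ fun i _ => hint i
  have heq : (fun p : X × Fin k => ((1 - η) * ψ (g p.1) p.2
      + (η / ((k : ℝ) - 1)) * ∑ i ∈ Finset.univ.erase p.2, ψ (g p.1) i))
      = fun p => (1 - η * (k : ℝ) / ((k : ℝ) - 1)) * ψ (g p.1) p.2
          + (η / ((k : ℝ) - 1)) * ∑ i, ψ (g p.1) i := by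
    funext p
    have : ∑ i ∈ Finset.univ.erase p.2, ψ (g p.1) i
        = (∑ i, ψ (g p.1) i) - ψ (g p.1) p.2 :=
      Finset.sum_erase_eq_sub (Finset.mem_univ _)
    rw [this]
    field_simp
    ring
  unfold noisyRisk cleanRisk
  rw [heq, integral_add (h1.const_mul _) (h2.const_mul _),
    integral_const_mul, integral_const_mul]
end

section
/- Suppose c1 ≤ Σ_{i=1}^{k} ψ(g(x), i) ≤ c2 holds for μ-almost every x and for g ∈ {f, f*}, and suppose Δ is a real number with ψ(f*(x), y) − ψ(f(x), y) ≤ Δ for μ-almost every (x, y). If η(x) ≤ (k−1)/k for μ-almost every x, then the noisy risks under simple non-uniform noise satisfy R^η_ψ(f*) − R^η_ψ(f) ≤ E_{x∼μ}[ ((c2 − c1 − kΔ)·η(x) + (k−1)·Δ) / (k−1) ]. -/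
open MeasureTheory Finset

/-- The ψ-risk under simple non-uniform label noise with noise-rate function η. -/
noncomputable def noisyRiskFn {X : Type*} [MeasurableSpace X] {k : ℕ}
    (μ : Measure (X × Fin k)) (ψ : (Fin k → ℝ) → Fin k → ℝ) (g : X → Fin k → ℝ)
    (η : X → ℝ) : ℝ :=
  ∫ p, ((1 - η p.1) * ψ (g p.1) p.2
      + (η p.1 / ((k : ℝ) - 1)) * ∑ i ∈ Finset.univ.erase p.2, ψ (g p.1) i) ∂μ

/-! Writing `S = ∑ i, ψ(g x, i)`, the noisy loss at `(x, y)` is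
`(1 - k η/(k-1)) ψ(g x, y) + η/(k-1) · S`. The condition `η ≤ (k-1)/k` makes the first
coefficient nonnegative, so the gap between `f*` and `f` is bounded pointwise by
`(1 - k η/(k-1)) Δ + η/(k-1) (c₂ - c₁)`, which is the integrand on the right. -/

theorem MeasureTheory.integrable_apply_of_measurable_index {α ι E : Type*} [MeasurableSpace α]
    [Fintype ι] [MeasurableSpace ι] [MeasurableSingletonClass ι] [NormedAddCommGroup E]
    {μ : Measure α} {F : α → ι → E} {σ : α → ι} (hσ : Measurable σ)
    (hF : ∀ i, Integrable (fun a => F a i) μ) :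
    Integrable (fun a => F a (σ a)) μ := by
  have hsum : (fun a => F a (σ a))
      = fun a => ∑ i, Set.indicator {b | σ b = i} (fun b => F b i) a := by
    funext a
    rw [Finset.sum_eq_single_of_mem (σ a) (mem_univ _) fun i _ hi => ?_]
    · simp
    · simp [Ne.symm hi]
  rw [hsum]
  exact integrable_finsetSum _ fun i _ => (hF i).indicator (hσ (measurableSet_singleton i))

theorem integrable_noisyRisk_integrand {X : Type*} [MeasurableSpace X] {k : ℕ}
    {μ : Measure (X × Fin k)} {ψ : (Fin k → ℝ) → Fin k → ℝ} {g : X → Fin k → ℝ} {η : X → ℝ}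
    (hg : ∀ i, Integrable (fun p : X × Fin k => ψ (g p.1) i) μ)
    (hη_meas : AEStronglyMeasurable (fun p : X × Fin k => η p.1) μ) {C : ℝ}
    (hη_bound : ∀ᵐ p ∂μ, ‖η p.1‖ ≤ C) :
    Integrable (fun p : X × Fin k => (1 - η p.1) * ψ (g p.1) p.2
      + (η p.1 / ((k : ℝ) - 1)) * ∑ i ∈ univ.erase p.2, ψ (g p.1) i) μ := by
  have hlabel : Integrable (fun p : X × Fin k => ψ (g p.1) p.2) μ :=
    integrable_apply_of_measurable_index measurable_snd hg
  have hsum : Integrable (fun p : X × Fin k => ∑ i, ψ (g p.1) i) μ :=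
    integrable_finsetSum _ fun i _ => hg i
  have hη_term := ((hsum.sub hlabel).div_const ((k : ℝ) - 1) |>.sub hlabel).bdd_mul
    hη_meas hη_bound
  refine (hlabel.add hη_term).congr (ae_of_all _ fun p => ?_)
  simp only [Pi.add_apply, Pi.sub_apply, sum_erase_eq_sub (mem_univ p.2)]
  ring

theorem noisy_loss_sub_le {K η a a' S S' c₁ c₂ Δ : ℝ} (hK : 1 < K) (hη₀ : 0 ≤ η)
    (hηK : η ≤ (K - 1) / K) (hS : c₁ ≤ S) (hS' : S' ≤ c₂) (hΔ : a' - a ≤ Δ) :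
    ((1 - η) * a' + η / (K - 1) * (S' - a')) - ((1 - η) * a + η / (K - 1) * (S - a))
      ≤ ((c₂ - c₁ - K * Δ) * η + (K - 1) * Δ) / (K - 1) := by
  have hK₁ : 0 < K - 1 := by linarith
  have hweight : 0 ≤ 1 - K * η / (K - 1) := by
    rw [sub_nonneg, div_le_one hK₁, ← le_div_iff₀' (by linarith)]
    exact hηK
  calc ((1 - η) * a' + η / (K - 1) * (S' - a')) - ((1 - η) * a + η / (K - 1) * (S - a))
      = (1 - K * η / (K - 1)) * (a' - a) + η / (K - 1) * (S' - S) := by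
        field_simp
        ring
    _ ≤ (1 - K * η / (K - 1)) * Δ + η / (K - 1) * (c₂ - c₁) := by
        gcongr
    _ = ((c₂ - c₁ - K * Δ) * η + (K - 1) * Δ) / (K - 1) := by
        field_simp
        ring

theorem noisyRiskFn_gap_bound_general {X : Type*} [MeasurableSpace X] {k : ℕ} (hk : 2 ≤ k)
    (μ : Measure (X × Fin k)) [IsProbabilityMeasure μ]
    (f fstar : X → Fin k → ℝ) (ψ : (Fin k → ℝ) → Fin k → ℝ)
    (hintf : ∀ i : Fin k, Integrable (fun p : X × Fin k => ψ (f p.1) i) μ)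
    (hintfstar : ∀ i : Fin k, Integrable (fun p : X × Fin k => ψ (fstar p.1) i) μ)
    (η : X → ℝ) (hη : ∀ x, 0 ≤ η x ∧ η x < 1)
    (hintη : Integrable (fun p : X × Fin k => η p.1) μ)
    (c1 c2 : ℝ)
    (hboundf : ∀ᵐ p ∂μ, c1 ≤ ∑ i, ψ (f p.1) i ∧ ∑ i, ψ (f p.1) i ≤ c2)
    (hboundfstar : ∀ᵐ p ∂μ, c1 ≤ ∑ i, ψ (fstar p.1) i ∧ ∑ i, ψ (fstar p.1) i ≤ c2)
    (Δ : ℝ) (hΔ : ∀ᵐ p ∂μ, ψ (fstar p.1) p.2 - ψ (f p.1) p.2 ≤ Δ)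
    (hηbound : ∀ᵐ p ∂μ, η p.1 ≤ ((k : ℝ) - 1) / k) :
    noisyRiskFn μ ψ fstar η - noisyRiskFn μ ψ f η
      ≤ ∫ p, ((c2 - c1 - (k : ℝ) * Δ) * η p.1 + ((k : ℝ) - 1) * Δ) / ((k : ℝ) - 1) ∂μ := by
  have hK : (1 : ℝ) < k := by exact_mod_cast hk
  have hη_norm : ∀ᵐ p ∂μ, ‖η p.1‖ ≤ 1 := ae_of_all _ fun p => by
    rw [Real.norm_eq_abs, abs_le]
    constructor <;> linarith [hη p.1]
  have hf := integrable_noisyRisk_integrand hintf hintη.1 hη_norm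
  have hfstar := integrable_noisyRisk_integrand hintfstar hintη.1 hη_norm
  have hrhs := ((hintη.const_mul (c2 - c1 - k * Δ)).add
    (integrable_const (((k : ℝ) - 1) * Δ))).div_const ((k : ℝ) - 1)
  rw [noisyRiskFn, noisyRiskFn, ← integral_sub hfstar hf]
  refine integral_mono_ae (hfstar.sub hf) hrhs ?_
  filter_upwards [hboundf, hboundfstar, hΔ, hηbound] with p hSf hSfstar hgap hηp
  simp only [sum_erase_eq_sub (mem_univ p.2)]
  exact noisy_loss_sub_le hK (hη p.1).1 hηp hSf.1 hSfstar.2 hgap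

/-- a bound on the difference of noisy risks under simple
non-uniform noise: if loss sums are a.e. in [c1, c2], the pointwise loss gap
ψ(f*(x), y) − ψ(f(x), y) is a.e. at most Δ, and η(x) ≤ (k−1)/k a.e., then
R^η_ψ(f*) − R^η_ψ(f) ≤ E[((c2 − c1 − kΔ)·η(x) + (k−1)·Δ)/(k−1)]. -/
theorem noisyRiskFn_gap_bound {X : Type*} [MeasurableSpace X] {k : ℕ} (hk : 2 ≤ k)
    (μ : Measure (X × Fin k)) [IsProbabilityMeasure μ]
    (f fstar : X → Fin k → ℝ) (ψ : (Fin k → ℝ) → Fin k → ℝ)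
    (hintf : ∀ i : Fin k, Integrable (fun p : X × Fin k => ψ (f p.1) i) μ)
    (hintfstar : ∀ i : Fin k, Integrable (fun p : X × Fin k => ψ (fstar p.1) i) μ)
    (η : X → ℝ) (hmeas : Measurable η) (hη : ∀ x, 0 ≤ η x ∧ η x < 1)
    (hintη : Integrable (fun p : X × Fin k => η p.1) μ)
    (c1 c2 : ℝ)
    (hboundf : ∀ᵐ p ∂μ, c1 ≤ ∑ i, ψ (f p.1) i ∧ ∑ i, ψ (f p.1) i ≤ c2)
    (hboundfstar : ∀ᵐ p ∂μ, c1 ≤ ∑ i, ψ (fstar p.1) i ∧ ∑ i, ψ (fstar p.1) i ≤ c2)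
    (Δ : ℝ) (hΔ : ∀ᵐ p ∂μ, ψ (fstar p.1) p.2 - ψ (f p.1) p.2 ≤ Δ)
    (hηbound : ∀ᵐ p ∂μ, η p.1 ≤ ((k : ℝ) - 1) / k) :
    noisyRiskFn μ ψ fstar η - noisyRiskFn μ ψ f η
      ≤ ∫ p, ((c2 - c1 - (k : ℝ) * Δ) * η p.1 + ((k : ℝ) - 1) * Δ) / ((k : ℝ) - 1) ∂μ :=
  noisyRiskFn_gap_bound_general hk μ f fstar ψ hintf hintfstar η hη hintη c1 c2 hboundf hboundfstar
    Δ hΔ hηbound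
end

section
/- (Corollary 1: noise tolerance under simple non-uniform label noise.) Suppose c1 ≤ Σ_{i=1}^{k} ψ(g(x), i) ≤ c2 holds for μ-almost every x and for g ∈ {f, f*}, that Δ ≤ 0 is a real number with ψ(f*(x), y) − ψ(f(x), y) ≤ Δ for μ-almost every (x, y), that c2 − c1 − kΔ > 0, and that the noise-rate function satisfies 0 ≤ η(x) < ((1−k)·Δ)/(c2 − c1 − kΔ) for μ-almost every x. Then R^η_ψ(f*) ≤ R^η_ψ(f), i.e., f* also minimizes the risk under simple non-uniform label noise relative to f. -/
open MeasureTheory Finset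

/-!
Write `t = η / (k - 1)`. Since the loss on the wrong labels is the total loss minus the loss on
the true label, the noisy loss at a point is `(1 - k t) ψ(g x, y) + t ∑ᵢ ψ(g x, i)`.
The rate condition says exactly `t (c₂ - c₁ - kΔ) < -Δ`; it forces `Δ < 0` and `k t < 1`, so the
weight `1 - k t` of the clean loss is nonnegative. The gap between the noisy losses of `f*` and
`f` is then at most `(1 - k t) Δ + t (c₂ - c₁) = Δ + t (c₂ - c₁ - kΔ) < 0` at almost every point,
and integrating gives the claim.
-/

theorem integrable_apply_snd {α ι : Type*} [MeasurableSpace α] [Fintype ι]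
    [MeasurableSpace ι] [MeasurableSingletonClass ι] {μ : Measure (α × ι)}
    {F : α × ι → ι → ℝ} (hF : ∀ i, Integrable (fun p => F p i) μ) :
    Integrable (fun p => F p p.2) μ := by
  have hdiag : (fun p : α × ι => F p p.2)
      = fun p => ∑ i, Set.indicator {q : α × ι | q.2 = i} (fun q => F q i) p := by
    funext p
    classical
    simp only [Set.indicator_apply, Set.mem_ofPred_eq, sum_ite_eq, mem_univ, ↓reduceIte]
  rw [hdiag]
  exact integrable_finsetSum _ fun i _ =>
    (hF i).indicator (measurable_snd (measurableSet_singleton i))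

noncomputable def noisyLoss (k : ℕ) (e : ℝ) (v : Fin k → ℝ) (y : Fin k) : ℝ :=
  (1 - e) * v y + (e / ((k : ℝ) - 1)) * ∑ i ∈ univ.erase y, v i

theorem noisyRiskFn_eq_integral_noisyLoss {X : Type*} [MeasurableSpace X] {k : ℕ}
    (μ : Measure (X × Fin k)) (ψ : (Fin k → ℝ) → Fin k → ℝ) (g : X → Fin k → ℝ)
    (η : X → ℝ) :
    noisyRiskFn μ ψ g η = ∫ p, noisyLoss k (η p.1) (ψ (g p.1)) p.2 ∂μ :=
  rfl

theorem noisyLoss_eq {k : ℕ} (hk : (k : ℝ) - 1 ≠ 0) (e : ℝ) (v : Fin k → ℝ) (y : Fin k) :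
    noisyLoss k e v y
      = (1 - k * (e / (k - 1))) * v y + e / (k - 1) * ∑ i, v i := by
  rw [noisyLoss, sum_erase_eq_sub (mem_univ y)]
  field_simp
  ring

theorem noisyLoss_le_noisyLoss {k : ℕ} (hk : 2 ≤ k) {e c₁ c₂ Δ : ℝ} {u v : Fin k → ℝ}
    {y : Fin k} (he : 0 ≤ e) (hc : c₁ ≤ c₂) (hu : ∑ i, u i ≤ c₂) (hv : c₁ ≤ ∑ i, v i)
    (hgap : u y - v y ≤ Δ) (hD : 0 < c₂ - c₁ - k * Δ)
    (hrate : e < (1 - k) * Δ / (c₂ - c₁ - k * Δ)) :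
    noisyLoss k e u y ≤ noisyLoss k e v y := by
  have hk1 : (0 : ℝ) < k - 1 := by
    have : (2 : ℝ) ≤ k := by exact_mod_cast hk
    linarith
  rw [noisyLoss_eq hk1.ne', noisyLoss_eq hk1.ne']
  set t := e / ((k : ℝ) - 1)
  have ht : 0 ≤ t := div_nonneg he hk1.le
  have hrate' : t * (c₂ - c₁ - k * Δ) < -Δ := by
    rw [lt_div_iff₀ hD] at hrate
    have : e = t * (k - 1) := (div_mul_cancel₀ e hk1.ne').symm
    rw [this] at hrate
    nlinarith
  have hΔ : Δ < 0 := by linarith [mul_nonneg ht hD.le]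
  have hweight : 0 ≤ 1 - k * t := by nlinarith [mul_nonneg ht (sub_nonneg.mpr hc)]
  calc (1 - k * t) * u y + t * ∑ i, u i
      ≤ (1 - k * t) * (v y + Δ) + t * (c₁ + (c₂ - c₁)) := by gcongr <;> linarith
    _ = (1 - k * t) * v y + t * c₁ + (t * (c₂ - c₁ - k * Δ) + Δ) := by ring
    _ ≤ (1 - k * t) * v y + t * c₁ := by linarith
    _ ≤ (1 - k * t) * v y + t * ∑ i, v i := by gcongr

theorem integrable_noisyLoss {X : Type*} [MeasurableSpace X] {k : ℕ} {μ : Measure (X × Fin k)}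
    {ψ : (Fin k → ℝ) → Fin k → ℝ} {g : X → Fin k → ℝ}
    (hψ : ∀ i, Integrable (fun p : X × Fin k => ψ (g p.1) i) μ) {η : X → ℝ}
    (hη : Measurable η) {C : ℝ} (hηC : ∀ᵐ p ∂μ, |η p.1| ≤ C) :
    Integrable (fun p => noisyLoss k (η p.1) (ψ (g p.1)) p.2) μ := by
  have htrue : Integrable (fun p : X × Fin k => ψ (g p.1) p.2) μ := integrable_apply_snd hψ
  have hwrong : Integrable (fun p : X × Fin k => ∑ i ∈ univ.erase p.2, ψ (g p.1) i) μ := by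
    simp_rw [sum_erase_eq_sub (mem_univ _)]
    exact (integrable_finsetSum _ fun i _ => hψ i).sub htrue
  have hη' : Measurable fun p : X × Fin k => η p.1 := hη.comp measurable_fst
  refine (htrue.bdd_mul (c := 1 + C) (hη'.const_sub 1).aestronglyMeasurable ?_).add
    (hwrong.bdd_mul (c := C / |(k : ℝ) - 1|) (hη'.div_const _).aestronglyMeasurable ?_)
  · filter_upwards [hηC] with p hp
    calc ‖1 - η p.1‖ ≤ ‖(1 : ℝ)‖ + ‖η p.1‖ := norm_sub_le _ _
      _ ≤ 1 + C := by rw [norm_one, Real.norm_eq_abs]; linarith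
  · filter_upwards [hηC] with p hp
    rw [norm_div, Real.norm_eq_abs, Real.norm_eq_abs]
    exact div_le_div_of_nonneg_right hp (abs_nonneg _)

theorem noise_tolerance_nonuniform_general {X : Type*} [MeasurableSpace X] {k : ℕ} (hk : 2 ≤ k)
    (μ : Measure (X × Fin k))
    (f fstar : X → Fin k → ℝ) (ψ : (Fin k → ℝ) → Fin k → ℝ)
    (hintf : ∀ i : Fin k, Integrable (fun p : X × Fin k => ψ (f p.1) i) μ)
    (hintfstar : ∀ i : Fin k, Integrable (fun p : X × Fin k => ψ (fstar p.1) i) μ)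
    (η : X → ℝ) (hmeas : Measurable η) (hη : ∀ x, 0 ≤ η x ∧ η x < 1)
    (c1 c2 : ℝ)
    (hboundf : ∀ᵐ p ∂μ, c1 ≤ ∑ i, ψ (f p.1) i ∧ ∑ i, ψ (f p.1) i ≤ c2)
    (hboundfstar : ∀ᵐ p ∂μ, c1 ≤ ∑ i, ψ (fstar p.1) i ∧ ∑ i, ψ (fstar p.1) i ≤ c2)
    (Δ : ℝ)
    (hΔ : ∀ᵐ p ∂μ, ψ (fstar p.1) p.2 - ψ (f p.1) p.2 ≤ Δ)
    (hdenom : 0 < c2 - c1 - (k : ℝ) * Δ)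
    (hηrange : ∀ᵐ p ∂μ, 0 ≤ η p.1 ∧
        η p.1 < ((1 - (k : ℝ)) * Δ) / (c2 - c1 - (k : ℝ) * Δ)) :
    noisyRiskFn μ ψ fstar η ≤ noisyRiskFn μ ψ f η := by
  have hηC : ∀ᵐ p ∂μ, |η p.1| ≤ 1 :=
    .of_forall fun p => abs_le.mpr ⟨by linarith [(hη p.1).1], (hη p.1).2.le⟩
  rw [noisyRiskFn_eq_integral_noisyLoss, noisyRiskFn_eq_integral_noisyLoss]
  refine integral_mono_ae (integrable_noisyLoss hintfstar hmeas hηC)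
    (integrable_noisyLoss hintf hmeas hηC) ?_
  filter_upwards [hboundf, hboundfstar, hΔ, hηrange] with p hf hfstar hgap hrate
  exact noisyLoss_le_noisyLoss hk hrate.1 (hf.1.trans hf.2) hfstar.2 hf.1 hgap hdenom hrate.2

/-- Corollary 1: noise tolerance under simple non-uniform label
noise. If loss sums are a.e. in [c1, c2], the pointwise loss gap is a.e. at most
Δ ≤ 0, c2 − c1 − kΔ > 0, and a.e. 0 ≤ η(x) < (1−k)Δ/(c2 − c1 − kΔ), then
R^η_ψ(f*) ≤ R^η_ψ(f). -/
theorem noise_tolerance_nonuniform {X : Type*} [MeasurableSpace X] {k : ℕ} (hk : 2 ≤ k)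
    (μ : Measure (X × Fin k)) [IsProbabilityMeasure μ]
    (f fstar : X → Fin k → ℝ) (ψ : (Fin k → ℝ) → Fin k → ℝ)
    (hintf : ∀ i : Fin k, Integrable (fun p : X × Fin k => ψ (f p.1) i) μ)
    (hintfstar : ∀ i : Fin k, Integrable (fun p : X × Fin k => ψ (fstar p.1) i) μ)
    (η : X → ℝ) (hmeas : Measurable η) (hη : ∀ x, 0 ≤ η x ∧ η x < 1)
    (hintη : Integrable (fun p : X × Fin k => η p.1) μ)
    (c1 c2 : ℝ)
    (hboundf : ∀ᵐ p ∂μ, c1 ≤ ∑ i, ψ (f p.1) i ∧ ∑ i, ψ (f p.1) i ≤ c2)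
    (hboundfstar : ∀ᵐ p ∂μ, c1 ≤ ∑ i, ψ (fstar p.1) i ∧ ∑ i, ψ (fstar p.1) i ≤ c2)
    (Δ : ℝ) (hΔneg : Δ ≤ 0)
    (hΔ : ∀ᵐ p ∂μ, ψ (fstar p.1) p.2 - ψ (f p.1) p.2 ≤ Δ)
    (hdenom : 0 < c2 - c1 - (k : ℝ) * Δ)
    (hηrange : ∀ᵐ p ∂μ, 0 ≤ η p.1 ∧
        η p.1 < ((1 - (k : ℝ)) * Δ) / (c2 - c1 - (k : ℝ) * Δ)) :
    noisyRiskFn μ ψ fstar η ≤ noisyRiskFn μ ψ f η :=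
  noise_tolerance_nonuniform_general hk μ f fstar ψ hintf hintfstar η hmeas hη c1 c2 hboundf
    hboundfstar Δ hΔ hdenom hηrange
end
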